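/- If T : H → H' is a bounded linear operator between Hilbert (or Banach) spaces such that both ker T and H'/range T are finite-dimensional, and S : H' → H'' is another such Fredholm operator, then S ∘ T is Fredholm and index(S ∘ T) = index(S) + index(T). -/

import Mathlib

open Module

noncomputable section

/-- A bounded operator between complex Hilbert spaces is *Fredholm* if its kernel and
cokernel are finite dimensional. -/
def IsFredholm {H H' : Type*} [NormedAddCommGroup H] [InnerProductSpace ℂ H] [CompleteSpace H]
    [NormedAddCommGroup H'] [InnerProductSpace ℂ H'] [CompleteSpace H']
    (T : H →L[ℂ] H') : Prop :=
  FiniteDimensional ℂ (LinearMap.ker (T : H →ₗ[ℂ] H')) ∧ FiniteDimensional ℂ (H' ⧸ LinearMap.range (T : H →ₗ[ℂ] H'))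

/-- The Fredholm index `dim ker T - dim coker T`. -/
def fredholmIndex {H H' : Type*} [NormedAddCommGroup H] [InnerProductSpace ℂ H] [CompleteSpace H]
    [NormedAddCommGroup H'] [InnerProductSpace ℂ H'] [CompleteSpace H']
    (T : H →L[ℂ] H') : ℤ :=
  (finrank ℂ (LinearMap.ker (T : H →ₗ[ℂ] H')) : ℤ) - (finrank ℂ (H' ⧸ LinearMap.range (T : H →ₗ[ℂ] H')) : ℤ)

/-- If a submodule and the corresponding quotient are finite dimensional, so is the whole
space. -/
private theorem fredholm_aux_ext {K V : Type*} [Field K] [AddCommGroup V] [Module K V]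
    (p : Submodule K V) (h1 : FiniteDimensional K p) (h2 : FiniteDimensional K (V ⧸ p)) :
    FiniteDimensional K V := by
  have h : Module.rank K V < Cardinal.aleph0 := by
    rw [← Submodule.rank_quotient_add_rank p]
    exact Cardinal.add_lt_aleph0 (Module.rank_lt_aleph0_iff.mpr h2)
      (Module.rank_lt_aleph0_iff.mpr h1)
  exact Module.rank_lt_aleph0_iff.mp h

/-- If a linear map has finite dimensional kernel and range, its domain is finite
dimensional. -/
private theorem fredholm_aux_of_map {K V W : Type*} [Field K] [AddCommGroup V] [Module K V]
    [AddCommGroup W] [Module K W] (f : V →ₗ[K] W)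
    (h1 : FiniteDimensional K (LinearMap.ker f)) (h2 : FiniteDimensional K (LinearMap.range f)) :
    FiniteDimensional K V :=
  fredholm_aux_ext (LinearMap.ker f) h1 (Module.Finite.equiv f.quotKerEquivRange.symm)

/-- Purely algebraic form of additivity of the Fredholm index. -/
private theorem fredholm_aux_main {K A B C : Type*} [Field K] [AddCommGroup A] [Module K A]
    [AddCommGroup B] [Module K B] [AddCommGroup C] [Module K C]
    (T : A →ₗ[K] B) (S : B →ₗ[K] C)
    (hT1 : FiniteDimensional K (LinearMap.ker T))
    (hT2 : FiniteDimensional K (B ⧸ LinearMap.range T))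
    (hS1 : FiniteDimensional K (LinearMap.ker S))
    (hS2 : FiniteDimensional K (C ⧸ LinearMap.range S)) :
    FiniteDimensional K (LinearMap.ker (S ∘ₗ T)) ∧
    FiniteDimensional K (C ⧸ LinearMap.range (S ∘ₗ T)) ∧
    (finrank K (LinearMap.ker (S ∘ₗ T)) : ℤ) - finrank K (C ⧸ LinearMap.range (S ∘ₗ T))
      = ((finrank K (LinearMap.ker S) : ℤ) - finrank K (C ⧸ LinearMap.range S))
        + ((finrank K (LinearMap.ker T) : ℤ) - finrank K (B ⧸ LinearMap.range T)) := by
  classical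
  have hker : LinearMap.ker (S ∘ₗ T) = Submodule.comap T (LinearMap.ker S) :=
    LinearMap.ker_comp T S
  have hrange : LinearMap.range (S ∘ₗ T) = Submodule.map S (LinearMap.range T) :=
    LinearMap.range_comp T S
  -- the restriction of `T` to `ker (S ∘ T)`
  set f : LinearMap.ker (S ∘ₗ T) →ₗ[K] B := T ∘ₗ (LinearMap.ker (S ∘ₗ T)).subtype with hf
  have hlef : LinearMap.ker T ≤ LinearMap.ker (S ∘ₗ T) := by
    rw [hker]
    intro x hx
    simp [Submodule.mem_comap, LinearMap.mem_ker.1 hx]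
  have hkf : LinearMap.ker f = Submodule.comap (LinearMap.ker (S ∘ₗ T)).subtype
      (LinearMap.ker T) := LinearMap.ker_comp _ _
  have hrf : LinearMap.range f = LinearMap.range T ⊓ LinearMap.ker S := by
    rw [hf, LinearMap.range_comp, Submodule.range_subtype, hker, Submodule.map_comap_eq]
  have ekf : (LinearMap.ker f) ≃ₗ[K] LinearMap.ker T :=
    (LinearEquiv.ofEq _ _ hkf).trans (Submodule.comapSubtypeEquivOfLe hlef)
  have erf : (LinearMap.range f) ≃ₗ[K] (LinearMap.range T ⊓ LinearMap.ker S : Submodule K B) :=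
    LinearEquiv.ofEq _ _ hrf
  have i1 : FiniteDimensional K (LinearMap.ker f) := Module.Finite.equiv ekf.symm
  have i2 : FiniteDimensional K (LinearMap.range f) := by
    rw [hrf]
    exact Submodule.finiteDimensional_of_le inf_le_right
  have FK : FiniteDimensional K (LinearMap.ker (S ∘ₗ T)) := fredholm_aux_of_map f i1 i2
  have e1 : finrank K (LinearMap.range T ⊓ LinearMap.ker S : Submodule K B)
      + finrank K (LinearMap.ker T) = finrank K (LinearMap.ker (S ∘ₗ T)) := by
    rw [← LinearEquiv.finrank_eq erf, ← LinearEquiv.finrank_eq ekf]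
    exact LinearMap.finrank_range_add_finrank_ker f
  -- cokernel side
  set p : Submodule K C := Submodule.map S (LinearMap.range T) with hp
  set q : Submodule K C := LinearMap.range S with hq
  have hpq : p ≤ q := LinearMap.map_le_range
  set Kk : Submodule K (C ⧸ p) := Submodule.map p.mkQ q with hKk
  have isoA : ((C ⧸ p) ⧸ Kk) ≃ₗ[K] C ⧸ q :=
    Submodule.quotientQuotientEquivQuotient p q hpq
  -- the map `B → (C ⧸ p)` induced by `S`
  set g : B →ₗ[K] C ⧸ p := p.mkQ ∘ₗ S with hg
  have hkg : LinearMap.ker g = LinearMap.range T ⊔ LinearMap.ker S := by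
    rw [hg, LinearMap.ker_comp, Submodule.ker_mkQ, hp, Submodule.comap_map_eq]
  have hrg : LinearMap.range g = Kk := by
    rw [hg, LinearMap.range_comp, hKk, hq]
  have isoB : (B ⧸ (LinearMap.range T ⊔ LinearMap.ker S)) ≃ₗ[K] Kk :=
    (Submodule.quotEquivOfEq _ _ hkg.symm).trans
      (g.quotKerEquivRange.trans (LinearEquiv.ofEq _ _ hrg))
  -- the sup quotient is a quotient of the finite-dimensional cokernel of T
  have isoC : ((B ⧸ LinearMap.range T) ⧸
        Submodule.map (LinearMap.range T).mkQ (LinearMap.ker S))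
      ≃ₗ[K] B ⧸ (LinearMap.range T ⊔ LinearMap.ker S) :=
    Submodule.quotientQuotientEquivQuotientSup (LinearMap.range T) (LinearMap.ker S)
  have fm : FiniteDimensional K (B ⧸ (LinearMap.range T ⊔ LinearMap.ker S)) :=
    Module.Finite.equiv isoC
  have fKk : FiniteDimensional K Kk := Module.Finite.equiv isoB
  have fQ : FiniteDimensional K ((C ⧸ p) ⧸ Kk) := Module.Finite.equiv isoA.symm
  have FC : FiniteDimensional K (C ⧸ p) := fredholm_aux_ext Kk fKk fQ
  have FC' : FiniteDimensional K (C ⧸ LinearMap.range (S ∘ₗ T)) := by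
    rw [hrange]; exact FC
  -- dimension count for the cokernel of S ∘ T
  have e2 : finrank K (C ⧸ q) + finrank K (B ⧸ (LinearMap.range T ⊔ LinearMap.ker S))
      = finrank K (C ⧸ p) := by
    rw [← LinearEquiv.finrank_eq isoA, LinearEquiv.finrank_eq isoB]
    exact Submodule.finrank_quotient_add_finrank Kk
  -- third isomorphism inside B ⧸ range T
  have e3 : finrank K (B ⧸ (LinearMap.range T ⊔ LinearMap.ker S))
      + finrank K (Submodule.map (LinearMap.range T).mkQ (LinearMap.ker S))
      = finrank K (B ⧸ LinearMap.range T) := by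
    rw [← LinearEquiv.finrank_eq isoC]
    exact Submodule.finrank_quotient_add_finrank _
  -- the map `ker S → B ⧸ range T`
  set g2 : LinearMap.ker S →ₗ[K] B ⧸ LinearMap.range T :=
    (LinearMap.range T).mkQ ∘ₗ (LinearMap.ker S).subtype with hg2
  have hrg2 : LinearMap.range g2
      = Submodule.map (LinearMap.range T).mkQ (LinearMap.ker S) := by
    rw [hg2, LinearMap.range_comp, Submodule.range_subtype]
  have hkg2 : LinearMap.ker g2 = Submodule.comap (LinearMap.ker S).subtype
      (LinearMap.range T ⊓ LinearMap.ker S) := by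
    rw [hg2, LinearMap.ker_comp, Submodule.ker_mkQ, Submodule.comap_inf,
      Submodule.comap_subtype_self, inf_top_eq]
  have ekg2 : (LinearMap.ker g2)
      ≃ₗ[K] (LinearMap.range T ⊓ LinearMap.ker S : Submodule K B) :=
    (LinearEquiv.ofEq _ _ hkg2).trans (Submodule.comapSubtypeEquivOfLe inf_le_right)
  have e4 : finrank K (Submodule.map (LinearMap.range T).mkQ (LinearMap.ker S))
      + finrank K (LinearMap.range T ⊓ LinearMap.ker S : Submodule K B)
      = finrank K (LinearMap.ker S) := by
    rw [← hrg2, ← LinearEquiv.finrank_eq ekg2]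
    exact LinearMap.finrank_range_add_finrank_ker g2
  have e5 : finrank K (C ⧸ LinearMap.range (S ∘ₗ T)) = finrank K (C ⧸ p) := by
    rw [hrange]
  refine ⟨FK, FC', ?_⟩
  rw [e5]
  omega

/-- Additivity of the Fredholm index under composition. -/
theorem fredholmIndex_comp {H H' H'' : Type*}
    [NormedAddCommGroup H] [InnerProductSpace ℂ H] [CompleteSpace H]
    [NormedAddCommGroup H'] [InnerProductSpace ℂ H'] [CompleteSpace H']
    [NormedAddCommGroup H''] [InnerProductSpace ℂ H''] [CompleteSpace H'']
    (T : H →L[ℂ] H') (S : H' →L[ℂ] H'')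
    (hT : IsFredholm T) (hS : IsFredholm S) :
    IsFredholm (S.comp T) ∧ fredholmIndex (S.comp T) = fredholmIndex S + fredholmIndex T := by
  obtain ⟨hT1, hT2⟩ := hT
  obtain ⟨hS1, hS2⟩ := hS
  have hco : ((S.comp T : H →L[ℂ] H'') : H →ₗ[ℂ] H'')
      = (S : H' →ₗ[ℂ] H'') ∘ₗ (T : H →ₗ[ℂ] H') := rfl
  have h := fredholm_aux_main (T : H →ₗ[ℂ] H') (S : H' →ₗ[ℂ] H'') hT1 hT2 hS1 hS2
  rw [← hco] at h
  exact ⟨⟨h.1, h.2.1⟩, h.2.2⟩
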